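/- arXiv:1703.02790 — 2 statements merged into one kernel-verified Lean document; each statement's English description precedes it below -/
import Mathlib

section
/- Gyöngy–Krylov characterization of convergence in probability (Lemma 2.2 of the paper): Let E be a Polish space (a complete separable metric space) equipped with its Borel σ-algebra, let (Ω, F, P) be a probability space, and let z_n : Ω → E be a sequence of measurable maps. Then there exists a measurable z : Ω → E such that z_n → z in probability (i.e. for every δ > 0, P({ω : d(z_n(ω), z(ω)) > δ}) → 0 as n → ∞) if and only if the following holds: for every pair of strictly increasing sequences (l_k) and (m_k) of indices there exist a common subsequence k ↦ (l(k), m(k)) and a Borel probability measure ν on E × E such that the laws of the pairs (z_{l(k)}, z_{m(k)}) (i.e. the pushforward measures of P under ω ↦ (z_{l(k)}(ω), z_{m(k)}(ω))) converge weakly to ν, and ν is supported on the diagonal, ν({(x,y) ∈ E × E : x = y}) = 1. -/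
open MeasureTheory Filter Set
open scoped ENNReal NNReal

/-- Gyöngy–Krylov characterization of convergence in probability: a sequence of
`E`-valued random variables (with `E` Polish) converges in probability to some
random variable iff every pair of subsequences admits a joint sub-subsequence
whose laws converge weakly to a measure supported on the diagonal. -/
theorem gyongy_krylov
    {E : Type*} [MetricSpace E] [CompleteSpace E] [SecondCountableTopology E]
    [MeasurableSpace E] [BorelSpace E]
    {Ω : Type*} [MeasurableSpace Ω] (P : Measure Ω) [IsProbabilityMeasure P]
    (z : ℕ → Ω → E) (hz : ∀ n, Measurable (z n)) :
    (∃ zlim : Ω → E, Measurable zlim ∧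
        ∀ δ : ℝ, 0 < δ →
          Tendsto (fun n => P {ω | δ < dist (z n ω) (zlim ω)}) atTop (nhds 0))
    ↔
    (∀ l m : ℕ → ℕ, StrictMono l → StrictMono m →
      ∃ φ : ℕ → ℕ, StrictMono φ ∧ ∃ ν : Measure (E × E),
        IsProbabilityMeasure ν ∧
        ν {p : E × E | p.1 = p.2} = 1 ∧
        ∀ f : BoundedContinuousFunction (E × E) ℝ,
          Tendsto (fun k => ∫ ω, f (z (l (φ k)) ω, z (m (φ k)) ω) ∂P)
            atTop (nhds (∫ p, f p ∂ν))) := by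
  have hdiagm : MeasurableSet {p : E × E | p.1 = p.2} :=
    (isClosed_eq continuous_fst continuous_snd).measurableSet
  constructor
  · rintro ⟨zlim, hzm, hconv⟩ l m hl hm
    -- convergence in probability gives `TendstoInMeasure`
    have htm : TendstoInMeasure P z atTop zlim := by
      rw [tendstoInMeasure_iff_dist]
      intro ε hε
      have h2 := hconv (ε / 2) (by linarith)
      refine tendsto_of_tendsto_of_tendsto_of_le_of_le tendsto_const_nhds h2
        (fun n => zero_le) (fun n => measure_mono ?_)
      intro ω hω
      simp only [mem_setOf_eq] at hω ⊢
      linarith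
    -- the pair sequence converges in measure to `(zlim, zlim)`
    have hpair : TendstoInMeasure P (fun k ω => (z (l k) ω, z (m k) ω)) atTop
        (fun ω => (zlim ω, zlim ω)) := by
      rw [tendstoInMeasure_iff_dist]
      intro ε hε
      have h1 := (tendstoInMeasure_iff_dist.mp htm ε hε).comp hl.tendsto_atTop
      have h2 := (tendstoInMeasure_iff_dist.mp htm ε hε).comp hm.tendsto_atTop
      have hsum : Tendsto (fun k => P {ω | ε ≤ dist (z (l k) ω) (zlim ω)}
          + P {ω | ε ≤ dist (z (m k) ω) (zlim ω)}) atTop (nhds 0) := by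
        simpa using h1.add h2
      refine tendsto_of_tendsto_of_tendsto_of_le_of_le tendsto_const_nhds hsum
        (fun k => zero_le) (fun k => ?_)
      refine le_trans (measure_mono ?_) (measure_union_le _ _)
      intro ω hω
      simp only [mem_setOf_eq, Prod.dist_eq] at hω
      rcases le_max_iff.mp hω with h | h
      · exact Or.inl h
      · exact Or.inr h
    obtain ⟨φ, hφ, hae⟩ := hpair.exists_seq_tendsto_ae
    refine ⟨φ, hφ, Measure.map (fun ω => (zlim ω, zlim ω)) P,
      Measure.isProbabilityMeasure_map (hzm.prodMk hzm).aemeasurable, ?_, ?_⟩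
    · rw [Measure.map_apply (hzm.prodMk hzm) hdiagm]
      have : (fun ω => (zlim ω, zlim ω)) ⁻¹' {p : E × E | p.1 = p.2} = Set.univ := by
        ext ω; simp
      rw [this, measure_univ]
    · intro f
      have hmk : ∀ k, AEStronglyMeasurable
          (fun ω => f (z (l (φ k)) ω, z (m (φ k)) ω)) P := fun k =>
        (f.continuous.measurable.comp ((hz _).prodMk (hz _))).aestronglyMeasurable
      have hlim : Tendsto (fun k => ∫ ω, f (z (l (φ k)) ω, z (m (φ k)) ω) ∂P)
          atTop (nhds (∫ ω, f (zlim ω, zlim ω) ∂P)) := by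
        refine tendsto_integral_of_dominated_convergence (fun _ => ‖f‖) hmk
          (integrable_const _)
          (fun k => Eventually.of_forall fun ω => f.norm_coe_le_norm _) ?_
        filter_upwards [hae] with ω hω
        exact (f.continuous.tendsto _).comp hω
      have hmap : ∫ p, f p ∂(Measure.map (fun ω => (zlim ω, zlim ω)) P)
          = ∫ ω, f (zlim ω, zlim ω) ∂P :=
        integral_map (hzm.prodMk hzm).aemeasurable
          f.continuous.measurable.aestronglyMeasurable
      rw [hmap]
      exact hlim
  · intro h
    -- Step 1: the sequence is Cauchy in probability
    have key : ∀ δ : ℝ, 0 < δ → ∀ ε : ℝ≥0∞, 0 < ε →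
        ∃ N, ∀ a, N ≤ a → ∀ b, N ≤ b →
          P {ω | δ ≤ dist (z a ω) (z b ω)} < ε := by
      intro δ hδ ε hε
      by_contra hcon
      push_neg at hcon
      choose a ha b hb hP using hcon
      set N : ℕ → ℕ := fun k => Nat.rec 0 (fun _ n => max (a n) (b n) + 1) k with hNdef
      have hN : ∀ k, N (k + 1) = max (a (N k)) (b (N k)) + 1 := fun k => rfl
      have hlmono : StrictMono fun k => a (N k) := by
        refine strictMono_nat_of_lt_succ fun k => ?_
        calc a (N k) < max (a (N k)) (b (N k)) + 1 :=
              Nat.lt_succ_of_le (le_max_left _ _)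
          _ = N (k + 1) := (hN k).symm
          _ ≤ a (N (k + 1)) := ha _
      have hmmono : StrictMono fun k => b (N k) := by
        refine strictMono_nat_of_lt_succ fun k => ?_
        calc b (N k) < max (a (N k)) (b (N k)) + 1 :=
              Nat.lt_succ_of_le (le_max_right _ _)
          _ = N (k + 1) := (hN k).symm
          _ ≤ b (N (k + 1)) := hb _
      obtain ⟨φ, hφ, ν, hν1, hνd, hconv⟩ := h _ _ hlmono hmmono
      haveI := hν1
      -- test function vanishing on the diagonal, equal to 1 where dist ≥ δ
      set F : E × E → ℝ := fun p => min (dist p.1 p.2 / δ) 1 with hFdef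
      have hFc : Continuous F := (continuous_dist.div_const δ).min continuous_const
      set f : BoundedContinuousFunction (E × E) ℝ :=
        BoundedContinuousFunction.ofNormedAddCommGroup F hFc 1 (fun p => by
          rw [Real.norm_eq_abs, abs_le]
          refine ⟨?_, min_le_right _ _⟩
          have h0 : (0 : ℝ) ≤ F p := le_min (div_nonneg dist_nonneg hδ.le) zero_le_one
          linarith) with hfdef
      have hfcoe : ∀ p, f p = F p := fun p => rfl
      -- the ν-integral of f is zero
      have hc : ν {p : E × E | p.1 = p.2}ᶜ = 0 := by
        rw [measure_compl hdiagm (measure_ne_top _ _), hνd, measure_univ, tsub_self]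
      have hae0 : ∀ᵐ p ∂ν, f p = 0 := by
        have hS : ∀ᵐ p ∂ν, p.1 = p.2 := by rw [ae_iff]; exact hc
        filter_upwards [hS] with p hp
        rw [hfcoe, hFdef]
        simp only [hp, dist_self, zero_div]
        exact min_eq_left zero_le_one
      have hint0 : ∫ p, f p ∂ν = 0 := integral_eq_zero_of_ae hae0
      -- lower bound on the integrals along the sequence
      have hεtop : ε ≠ ∞ :=
        ne_top_of_le_ne_top ENNReal.one_ne_top (le_trans (hP 0) prob_le_one)
      have hεR : 0 < ε.toReal := ENNReal.toReal_pos hε.ne' hεtop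
      have hlow : ∀ k, ε.toReal ≤ ∫ ω, f (z (a (N (φ k))) ω, z (b (N (φ k))) ω) ∂P := by
        intro k
        set S : Set Ω := {ω | δ ≤ dist (z (a (N (φ k))) ω) (z (b (N (φ k))) ω)} with hSdef
        have hSm : MeasurableSet S :=
          measurableSet_le measurable_const ((hz _).dist (hz _))
        have hfi : Integrable (fun ω => f (z (a (N (φ k))) ω, z (b (N (φ k))) ω)) P :=
          ⟨(f.continuous.measurable.comp ((hz _).prodMk (hz _))).aestronglyMeasurable,
            HasFiniteIntegral.of_bounded (C := ‖f‖)
              (Eventually.of_forall fun ω => f.norm_coe_le_norm _)⟩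
        calc ε.toReal ≤ (P S).toReal :=
              ENNReal.toReal_mono (measure_ne_top _ _) (hP (N (φ k)))
          _ = ∫ ω, S.indicator (fun _ => (1 : ℝ)) ω ∂P := by
              rw [integral_indicator_const (1 : ℝ) hSm]; simp [Measure.real]
          _ ≤ ∫ ω, f (z (a (N (φ k))) ω, z (b (N (φ k))) ω) ∂P := by
              refine integral_mono ((integrable_const (1 : ℝ)).indicator hSm) hfi ?_
              intro ω
              by_cases hω : ω ∈ S
              · have hd : δ ≤ dist (z (a (N (φ k))) ω) (z (b (N (φ k))) ω) := hω
                have h1 : (1 : ℝ) ≤ dist (z (a (N (φ k))) ω) (z (b (N (φ k))) ω) / δ :=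
                  (one_le_div hδ).mpr hd
                simp only [indicator_of_mem hω, hfcoe, hFdef]
                rw [min_eq_right h1]
              · simp only [indicator_of_notMem hω, hfcoe, hFdef]
                exact le_min (div_nonneg dist_nonneg hδ.le) zero_le_one
      have hge : ε.toReal ≤ ∫ p, f p ∂ν :=
        ge_of_tendsto (hconv f) (Eventually.of_forall hlow)
      rw [hint0] at hge
      linarith
    -- Step 2: extract an a.e. convergent subsequence and a measurable limit
    have hNk : ∀ k : ℕ, ∃ N, ∀ a, N ≤ a → ∀ b, N ≤ b →
        P {ω | (2 : ℝ)⁻¹ ^ k ≤ dist (z a ω) (z b ω)} < (2 : ℝ≥0∞)⁻¹ ^ k := by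
      intro k
      refine key _ (by positivity) _ (ENNReal.pow_pos ?_ _)
      exact ENNReal.inv_pos.mpr ENNReal.ofNat_ne_top
    choose N0 hN0 using hNk
    set n : ℕ → ℕ := fun k => Nat.rec (N0 0) (fun k' nk => max (N0 (k' + 1)) (nk + 1)) k
      with hndef
    have hnsucc : ∀ k, n (k + 1) = max (N0 (k + 1)) (n k + 1) := fun k => rfl
    have hnmono : StrictMono n := by
      refine strictMono_nat_of_lt_succ fun k => ?_
      rw [hnsucc]
      exact Nat.lt_of_lt_of_le (Nat.lt_succ_self _) (le_max_right _ _)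
    have hnge : ∀ k, N0 k ≤ n k := by
      intro k
      cases k with
      | zero => exact le_rfl
      | succ k => rw [hnsucc]; exact le_max_left _ _
    set s : ℕ → Set Ω :=
      fun k => {ω | (2 : ℝ)⁻¹ ^ k ≤ dist (z (n k) ω) (z (n (k + 1)) ω)} with hsdef
    have hsle : ∀ k, P (s k) ≤ (2 : ℝ≥0∞)⁻¹ ^ k := by
      intro k
      refine (hN0 k (n k) (hnge k) (n (k + 1)) ?_).le
      exact le_trans (hnge k) (hnmono (Nat.lt_succ_self k)).le
    have htsum : (∑' k, P (s k)) ≠ ∞ := by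
      refine ne_top_of_le_ne_top ?_ (ENNReal.tsum_le_tsum hsle)
      simpa only [ENNReal.tsum_geometric, ENNReal.one_sub_inv_two, inv_inv] using
        ENNReal.ofNat_ne_top
    have hcauchy : ∀ᵐ ω ∂P, ∃ x : E, Tendsto (fun k => z (n k) ω) atTop (nhds x) := by
      filter_upwards [ae_eventually_notMem htsum] with ω hω
      obtain ⟨K, hK⟩ := eventually_atTop.mp hω
      have hsum : Summable fun k => dist (z (n k) ω) (z (n (k + 1)) ω) := by
        rw [← summable_nat_add_iff K]
        have hgeo : Summable fun j : ℕ => (2 : ℝ)⁻¹ ^ (j + K) := by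
          rw [summable_nat_add_iff K]
          simpa only [one_div] using summable_geometric_two
        refine Summable.of_nonneg_of_le (fun _ => dist_nonneg) (fun j => ?_) hgeo
        have hnot := hK (j + K) (Nat.le_add_left K j)
        simp only [hsdef, mem_setOf_eq, not_le] at hnot
        exact hnot.le
      exact cauchySeq_tendsto_of_complete (cauchySeq_of_summable_dist hsum)
    obtain ⟨zlim, hzlimm, hztend⟩ :=
      measurable_limit_of_tendsto_metrizable_ae (fun k => (hz (n k)).aemeasurable) hcauchy
    refine ⟨zlim, hzlimm, ?_⟩
    -- Step 3: convergence in probability of the full sequence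
    intro δ hδ
    have htm : TendstoInMeasure P (fun k => z (n k)) atTop zlim :=
      tendstoInMeasure_of_tendsto_ae (fun k => (hz (n k)).aestronglyMeasurable) hztend
    rw [ENNReal.tendsto_atTop_zero]
    intro ε hε
    have hε2 : 0 < ε / 2 := ENNReal.div_pos hε.ne' ENNReal.ofNat_ne_top
    obtain ⟨N1, hN1⟩ := key (δ / 2) (by linarith) (ε / 2) hε2
    obtain ⟨K1, hK1⟩ := ENNReal.tendsto_atTop_zero.mp (tendstoInMeasure_iff_dist.mp htm (δ / 2) (by linarith)) (ε / 2) hε2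
    set k0 := max K1 N1 with hk0
    refine ⟨n k0, fun j hj => ?_⟩
    have hjN1 : N1 ≤ j :=
      le_trans (le_trans (le_max_right _ _) hnmono.le_apply) hj
    have hnk0N1 : N1 ≤ n k0 := le_trans (le_max_right _ _) hnmono.le_apply
    have h1 : P {ω | δ / 2 ≤ dist (z j ω) (z (n k0) ω)} < ε / 2 :=
      hN1 j hjN1 (n k0) hnk0N1
    have h2 : P {ω | δ / 2 ≤ dist (z (n k0) ω) (zlim ω)} ≤ ε / 2 :=
      hK1 k0 (le_max_left _ _)
    calc P {ω | δ < dist (z j ω) (zlim ω)}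
        ≤ P ({ω | δ / 2 ≤ dist (z j ω) (z (n k0) ω)}
            ∪ {ω | δ / 2 ≤ dist (z (n k0) ω) (zlim ω)}) := by
          refine measure_mono ?_
          intro ω hω
          simp only [mem_setOf_eq, mem_union] at hω ⊢
          by_contra hcon
          push_neg at hcon
          have htri := dist_triangle (z j ω) (z (n k0) ω) (zlim ω)
          linarith [hcon.1, hcon.2]
      _ ≤ P {ω | δ / 2 ≤ dist (z j ω) (z (n k0) ω)}
            + P {ω | δ / 2 ≤ dist (z (n k0) ω) (zlim ω)} := measure_union_le _ _
      _ ≤ ε / 2 + ε / 2 := add_le_add h1.le h2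
      _ = ε := ENNReal.add_halves ε
end

section
/- Lipschitz property of the truncated cubic nonlinearity (Section 5 of the paper): let ρ : ℝ → ℝ be a smooth function with 0 ≤ ρ ≤ 1, ρ(r) = 1 for r ≤ 1, ρ(r) = 0 for r ≥ 2, and which is Lipschitz with constant M > 0. For a continuously differentiable function y : ℝ → ℝ on [0,1], set N(y) = (∫₀¹ (y(x)² + y'(x)²) dx)^{1/2}, and for R > 0 define f_R(y)(x) = ρ(N(y)/R) · y(x)³. Then there exists a constant C > 0 depending only on M (and not on R) such that for all R > 0 and all continuously differentiable y₁, y₂ on [0,1]: (∫₀¹ (f_R(y₁)(x) − f_R(y₂)(x))² dx)^{1/2} ≤ C R² · N(y₁ − y₂). -/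
open Set intervalIntegral
open scoped NNReal

private lemma myII {f : ℝ → ℝ} (hf : ContinuousOn f (Icc 0 1)) :
    IntervalIntegrable f MeasureTheory.volume 0 1 :=
  (by rwa [uIcc_of_le (zero_le_one)] : ContinuousOn f (uIcc 0 1)).intervalIntegrable

private lemma contOn_of_deriv {y y' : ℝ → ℝ}
    (hy : ∀ x ∈ Icc (0:ℝ) 1, HasDerivAt y (y' x) x) :
    ContinuousOn y (Icc 0 1) :=
  fun x hx => (hy x hx).continuousAt.continuousWithinAt

/-- Sobolev sup bound. -/
private lemma sup_sq_le {y y' : ℝ → ℝ}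
    (hy : ∀ x ∈ Icc (0:ℝ) 1, HasDerivAt y (y' x) x)
    (hy' : ContinuousOn y' (Icc (0:ℝ) 1)) :
    ∀ x ∈ Icc (0:ℝ) 1, y x ^ 2 ≤ 2 * ∫ t in (0:ℝ)..1, (y t ^ 2 + y' t ^ 2) := by
  have hyc : ContinuousOn y (Icc 0 1) := contOn_of_deriv hy
  have hsq : ContinuousOn (fun s => y s ^ 2) (Icc (0:ℝ) 1) := hyc.pow 2
  obtain ⟨t, ht, htmin⟩ := isCompact_Icc.exists_isMinOn (α := ℝ)
    (nonempty_Icc.mpr zero_le_one) hsq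
  have hIy2 : IntervalIntegrable (fun s => y s ^ 2) MeasureTheory.volume 0 1 := myII hsq
  have hIsum : IntervalIntegrable (fun s => y s ^ 2 + y' s ^ 2) MeasureTheory.volume 0 1 :=
    myII (hsq.add (hy'.pow 2))
  have h1 : y t ^ 2 ≤ ∫ s in (0:ℝ)..1, y s ^ 2 := by
    calc y t ^ 2 = ∫ _ in (0:ℝ)..1, y t ^ 2 := by simp
    _ ≤ ∫ s in (0:ℝ)..1, y s ^ 2 :=
      integral_mono_on zero_le_one intervalIntegrable_const hIy2 (fun s hs => htmin hs)
  have hy2le : (∫ s in (0:ℝ)..1, y s ^ 2) ≤ ∫ s in (0:ℝ)..1, (y s ^ 2 + y' s ^ 2) := by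
    apply integral_mono_on zero_le_one hIy2 hIsum
    intro s hs
    nlinarith [sq_nonneg (y' s)]
  intro x hx
  have hsub : uIcc t x ⊆ Icc (0:ℝ) 1 := uIcc_subset_Icc ht hx
  have FTC : ∫ s in t..x, 2 * y s * y' s = y x ^ 2 - y t ^ 2 := by
    apply intervalIntegral.integral_eq_sub_of_hasDerivAt
    · intro s hs
      have := (hy s (hsub hs)).fun_pow 2
      simpa [mul_comm, pow_one] using this
    · exact (ContinuousOn.mono (by fun_prop (disch := skip)) hsub).intervalIntegrable
  have habsII : IntervalIntegrable (fun s => |2 * y s * y' s|) MeasureTheory.volume 0 1 :=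
    myII ((by fun_prop (disch := skip) : ContinuousOn (fun s => 2 * y s * y' s) (Icc 0 1)).abs)
  have hptw : ∀ s ∈ Icc (0:ℝ) 1, |2 * y s * y' s| ≤ y s ^ 2 + y' s ^ 2 := by
    intro s _
    rw [abs_le]
    constructor <;> nlinarith [sq_nonneg (y s + y' s), sq_nonneg (y s - y' s)]
  have key : ∀ a b : ℝ, a ∈ Icc (0:ℝ) 1 → b ∈ Icc (0:ℝ) 1 → a ≤ b →
      |∫ s in a..b, 2 * y s * y' s| ≤ ∫ s in (0:ℝ)..1, (y s ^ 2 + y' s ^ 2) := by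
    intro a b ha hb hab
    calc |∫ s in a..b, 2 * y s * y' s| ≤ ∫ s in a..b, |2 * y s * y' s| :=
          abs_integral_le_integral_abs hab
    _ ≤ ∫ s in (0:ℝ)..1, |2 * y s * y' s| := by
        apply integral_mono_interval ha.1 hab hb.2 _ habsII
        exact MeasureTheory.ae_of_all _ (fun s => abs_nonneg _)
    _ ≤ ∫ s in (0:ℝ)..1, (y s ^ 2 + y' s ^ 2) :=
        integral_mono_on zero_le_one habsII hIsum hptw
  have habs : |∫ s in t..x, 2 * y s * y' s| ≤ ∫ s in (0:ℝ)..1, (y s ^ 2 + y' s ^ 2) := by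
    rcases le_total t x with h | h
    · exact key t x ht hx h
    · rw [intervalIntegral.integral_symm, abs_neg]
      exact key x t hx ht h
  have := abs_le.mp habs
  rw [FTC] at this
  linarith [this.2, h1, hy2le]

private lemma quad_disc {A B S : ℝ} (hA : 0 ≤ A)
    (h : ∀ c : ℝ, 0 ≤ A * c ^ 2 + 2 * S * c + B) : S ^ 2 ≤ A * B := by
  rcases eq_or_lt_of_le hA with hA0 | hApos
  · by_contra hc
    push_neg at hc
    have hS : S ≠ 0 := by
      intro h0
      rw [h0, ← hA0] at hc
      simp at hc
    have := h (-(B + 1) / (2 * S))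
    rw [← hA0] at this
    have h2S : 2 * S ≠ 0 := by simpa using hS
    field_simp at this
    rw [le_div_iff₀ (by positivity)] at this
    nlinarith [this, (by positivity : (0:ℝ) < S ^ 2)]
  · have := h (-S / A)
    have hA' : A ≠ 0 := ne_of_gt hApos
    field_simp at this
    have h3 : (0:ℝ) < A ^ 2 * A := by positivity
    linarith [this]

private lemma cs_integral {f g : ℝ → ℝ} (hf : ContinuousOn f (Icc 0 1))
    (hg : ContinuousOn g (Icc 0 1)) :
    (∫ x in (0:ℝ)..1, f x * g x) ≤
      Real.sqrt (∫ x in (0:ℝ)..1, f x ^ 2) * Real.sqrt (∫ x in (0:ℝ)..1, g x ^ 2) := by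
  set A := ∫ x in (0:ℝ)..1, f x ^ 2 with hAdef
  set B := ∫ x in (0:ℝ)..1, g x ^ 2 with hBdef
  set S := ∫ x in (0:ℝ)..1, f x * g x with hSdef
  have hA : 0 ≤ A := integral_nonneg zero_le_one fun u _ => sq_nonneg _
  have hB : 0 ≤ B := integral_nonneg zero_le_one fun u _ => sq_nonneg _
  have hIf2 : IntervalIntegrable (fun x => f x ^ 2) MeasureTheory.volume 0 1 := myII (hf.pow 2)
  have hIg2 : IntervalIntegrable (fun x => g x ^ 2) MeasureTheory.volume 0 1 := myII (hg.pow 2)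
  have hIfg : IntervalIntegrable (fun x => f x * g x) MeasureTheory.volume 0 1 := myII (hf.mul hg)
  have hq : ∀ c : ℝ, 0 ≤ A * c ^ 2 + 2 * S * c + B := by
    intro c
    have h0 : 0 ≤ ∫ x in (0:ℝ)..1, (c * f x + g x) ^ 2 :=
      integral_nonneg zero_le_one fun u _ => sq_nonneg _
    have hexp : (∫ x in (0:ℝ)..1, (c * f x + g x) ^ 2)
        = A * c ^ 2 + 2 * S * c + B := by
      have : (fun x => (c * f x + g x) ^ 2)
          = fun x => (c ^ 2 * f x ^ 2 + (2 * c) * (f x * g x)) + g x ^ 2 := by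
        funext x; ring
      rw [this, intervalIntegral.integral_add ((hIf2.const_mul _).add (hIfg.const_mul _)) hIg2,
        intervalIntegral.integral_add (hIf2.const_mul _) (hIfg.const_mul _),
        intervalIntegral.integral_const_mul, intervalIntegral.integral_const_mul]
      ring
    rw [hexp] at h0
    exact h0
  have hS2 := quad_disc hA hq
  calc S ≤ |S| := le_abs_self _
  _ = Real.sqrt (S ^ 2) := (Real.sqrt_sq_eq_abs S).symm
  _ ≤ Real.sqrt (A * B) := Real.sqrt_le_sqrt hS2
  _ = Real.sqrt A * Real.sqrt B := Real.sqrt_mul hA B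

private lemma twoD_cs {a b c e : ℝ} (ha : 0 ≤ a) (hb : 0 ≤ b) (hc : 0 ≤ c) (he : 0 ≤ e) :
    a * c + b * e ≤ Real.sqrt (a ^ 2 + b ^ 2) * Real.sqrt (c ^ 2 + e ^ 2) := by
  have h1 : (a * c + b * e) ^ 2 ≤ (a ^ 2 + b ^ 2) * (c ^ 2 + e ^ 2) := by
    nlinarith [sq_nonneg (a * e - b * c)]
  calc a * c + b * e = Real.sqrt ((a * c + b * e) ^ 2) :=
        (Real.sqrt_sq (by positivity)).symm
  _ ≤ Real.sqrt ((a ^ 2 + b ^ 2) * (c ^ 2 + e ^ 2)) := Real.sqrt_le_sqrt h1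
  _ = _ := Real.sqrt_mul (by positivity) _

private lemma rev_triangle {y₁ y₁' y₂ y₂' : ℝ → ℝ}
    (h₁ : ContinuousOn y₁ (Icc 0 1)) (h₁' : ContinuousOn y₁' (Icc 0 1))
    (h₂ : ContinuousOn y₂ (Icc 0 1)) (h₂' : ContinuousOn y₂' (Icc 0 1)) :
    Real.sqrt (∫ t in (0:ℝ)..1, (y₁ t ^ 2 + y₁' t ^ 2)) ≤
      Real.sqrt (∫ t in (0:ℝ)..1, ((y₁ t - y₂ t) ^ 2 + (y₁' t - y₂' t) ^ 2)) +
      Real.sqrt (∫ t in (0:ℝ)..1, (y₂ t ^ 2 + y₂' t ^ 2)) := by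
  have hd : ContinuousOn (fun t => y₁ t - y₂ t) (Icc (0:ℝ) 1) := h₁.sub h₂
  have hd' : ContinuousOn (fun t => y₁' t - y₂' t) (Icc (0:ℝ) 1) := h₁'.sub h₂'
  set Id := ∫ t in (0:ℝ)..1, ((y₁ t - y₂ t) ^ 2 + (y₁' t - y₂' t) ^ 2) with hIddef
  set I₂ := ∫ t in (0:ℝ)..1, (y₂ t ^ 2 + y₂' t ^ 2) with hI₂def
  have hIdnn : 0 ≤ Id := integral_nonneg zero_le_one fun u _ => by positivity
  have hI₂nn : 0 ≤ I₂ := integral_nonneg zero_le_one fun u _ => by positivity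
  have iid2 : IntervalIntegrable (fun t => (y₁ t - y₂ t) ^ 2) MeasureTheory.volume 0 1 :=
    myII (hd.pow 2)
  have iid'2 : IntervalIntegrable (fun t => (y₁' t - y₂' t) ^ 2) MeasureTheory.volume 0 1 :=
    myII (hd'.pow 2)
  have ii22 : IntervalIntegrable (fun t => y₂ t ^ 2) MeasureTheory.volume 0 1 := myII (h₂.pow 2)
  have ii2'2 : IntervalIntegrable (fun t => y₂' t ^ 2) MeasureTheory.volume 0 1 := myII (h₂'.pow 2)
  have iic1 : IntervalIntegrable (fun t => (y₁ t - y₂ t) * y₂ t) MeasureTheory.volume 0 1 :=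
    myII (hd.mul h₂)
  have iic2 : IntervalIntegrable (fun t => (y₁' t - y₂' t) * y₂' t) MeasureTheory.volume 0 1 :=
    myII (hd'.mul h₂')
  -- expansion
  have hexp : (∫ t in (0:ℝ)..1, (y₁ t ^ 2 + y₁' t ^ 2))
      = Id + 2 * ((∫ t in (0:ℝ)..1, (y₁ t - y₂ t) * y₂ t)
        + (∫ t in (0:ℝ)..1, (y₁' t - y₂' t) * y₂' t)) + I₂ := by
    rw [hIddef, hI₂def, ← intervalIntegral.integral_add iic1 iic2,
      ← intervalIntegral.integral_const_mul (2:ℝ),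
      ← intervalIntegral.integral_add (iid2.add iid'2) ((iic1.add iic2).const_mul 2),
      ← intervalIntegral.integral_add
        ((iid2.add iid'2).add ((iic1.add iic2).const_mul 2)) (ii22.add ii2'2)]
    exact intervalIntegral.integral_congr (fun t _ => by ring)
  -- bound the cross term
  have hcross : (∫ t in (0:ℝ)..1, (y₁ t - y₂ t) * y₂ t)
      + (∫ t in (0:ℝ)..1, (y₁' t - y₂' t) * y₂' t) ≤ Real.sqrt Id * Real.sqrt I₂ := by
    have c1 := cs_integral hd h₂
    have c2 := cs_integral hd' h₂'
    have hsplit1 : Id = (∫ t in (0:ℝ)..1, (y₁ t - y₂ t) ^ 2)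
        + (∫ t in (0:ℝ)..1, (y₁' t - y₂' t) ^ 2) := by
      rw [hIddef, intervalIntegral.integral_add iid2 iid'2]
    have hsplit2 : I₂ = (∫ t in (0:ℝ)..1, y₂ t ^ 2) + (∫ t in (0:ℝ)..1, y₂' t ^ 2) := by
      rw [hI₂def, intervalIntegral.integral_add ii22 ii2'2]
    have n1 : 0 ≤ ∫ t in (0:ℝ)..1, (y₁ t - y₂ t) ^ 2 :=
      integral_nonneg zero_le_one fun u _ => sq_nonneg _
    have n2 : 0 ≤ ∫ t in (0:ℝ)..1, (y₁' t - y₂' t) ^ 2 :=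
      integral_nonneg zero_le_one fun u _ => sq_nonneg _
    have n3 : 0 ≤ ∫ t in (0:ℝ)..1, y₂ t ^ 2 :=
      integral_nonneg zero_le_one fun u _ => sq_nonneg _
    have n4 : 0 ≤ ∫ t in (0:ℝ)..1, y₂' t ^ 2 :=
      integral_nonneg zero_le_one fun u _ => sq_nonneg _
    have h2d := twoD_cs (Real.sqrt_nonneg (∫ t in (0:ℝ)..1, (y₁ t - y₂ t) ^ 2))
      (Real.sqrt_nonneg (∫ t in (0:ℝ)..1, (y₁' t - y₂' t) ^ 2))
      (Real.sqrt_nonneg (∫ t in (0:ℝ)..1, y₂ t ^ 2))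
      (Real.sqrt_nonneg (∫ t in (0:ℝ)..1, y₂' t ^ 2))
    rw [Real.sq_sqrt n1, Real.sq_sqrt n2, Real.sq_sqrt n3, Real.sq_sqrt n4] at h2d
    rw [hsplit1, hsplit2]
    calc _ ≤ Real.sqrt (∫ t in (0:ℝ)..1, (y₁ t - y₂ t) ^ 2)
          * Real.sqrt (∫ t in (0:ℝ)..1, y₂ t ^ 2)
        + Real.sqrt (∫ t in (0:ℝ)..1, (y₁' t - y₂' t) ^ 2)
          * Real.sqrt (∫ t in (0:ℝ)..1, y₂' t ^ 2) := add_le_add c1 c2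
    _ ≤ _ := h2d
  -- conclude
  have hfinal : (∫ t in (0:ℝ)..1, (y₁ t ^ 2 + y₁' t ^ 2))
      ≤ (Real.sqrt Id + Real.sqrt I₂) ^ 2 := by
    rw [hexp]
    have e1 : Real.sqrt Id ^ 2 = Id := Real.sq_sqrt hIdnn
    have e2 : Real.sqrt I₂ ^ 2 = I₂ := Real.sq_sqrt hI₂nn
    nlinarith [hcross]
  calc Real.sqrt (∫ t in (0:ℝ)..1, (y₁ t ^ 2 + y₁' t ^ 2))
      ≤ Real.sqrt ((Real.sqrt Id + Real.sqrt I₂) ^ 2) := Real.sqrt_le_sqrt hfinal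
  _ = Real.sqrt Id + Real.sqrt I₂ := Real.sqrt_sq (by positivity)

set_option maxHeartbeats 1000000 in
private lemma core_lemma
    (ρ : ℝ → ℝ) (M : ℝ≥0)
    (hρ_nonneg : ∀ r, 0 ≤ ρ r) (hρ_le_one : ∀ r, ρ r ≤ 1)
    (hρ_zero : ∀ r : ℝ, 2 ≤ r → ρ r = 0)
    (hρ_lip : LipschitzWith M ρ)
    (R : ℝ) (hR : 0 < R)
    (y₁ y₁' y₂ y₂' : ℝ → ℝ)
    (hy₁ : ∀ x ∈ Icc (0:ℝ) 1, HasDerivAt y₁ (y₁' x) x)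
    (hy₁' : ContinuousOn y₁' (Icc (0:ℝ) 1))
    (hy₂ : ∀ x ∈ Icc (0:ℝ) 1, HasDerivAt y₂ (y₂' x) x)
    (hy₂' : ContinuousOn y₂' (Icc (0:ℝ) 1))
    (hN : Real.sqrt (∫ t in (0:ℝ)..1, ((y₂ t) ^ 2 + (y₂' t) ^ 2))
        ≤ Real.sqrt (∫ t in (0:ℝ)..1, ((y₁ t) ^ 2 + (y₁' t) ^ 2))) :
    Real.sqrt (∫ x in (0:ℝ)..1,
        (ρ (Real.sqrt (∫ t in (0:ℝ)..1, ((y₁ t) ^ 2 + (y₁' t) ^ 2)) / R) * (y₁ x) ^ 3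
          - ρ (Real.sqrt (∫ t in (0:ℝ)..1, ((y₂ t) ^ 2 + (y₂' t) ^ 2)) / R) * (y₂ x) ^ 3) ^ 2)
      ≤ (34 + 23 * (M:ℝ)) * R ^ 2 *
        Real.sqrt (∫ x in (0:ℝ)..1, ((y₁ x - y₂ x) ^ 2 + (y₁' x - y₂' x) ^ 2)) := by
  have hc₁ : ContinuousOn y₁ (Icc 0 1) := contOn_of_deriv hy₁
  have hc₂ : ContinuousOn y₂ (Icc 0 1) := contOn_of_deriv hy₂
  set I₁ := ∫ t in (0:ℝ)..1, ((y₁ t) ^ 2 + (y₁' t) ^ 2) with hI₁def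
  set I₂ := ∫ t in (0:ℝ)..1, ((y₂ t) ^ 2 + (y₂' t) ^ 2) with hI₂def
  set Idd := ∫ x in (0:ℝ)..1, ((y₁ x - y₂ x) ^ 2 + (y₁' x - y₂' x) ^ 2) with hIdddef
  set N₁ := Real.sqrt I₁ with hN₁def
  set N₂ := Real.sqrt I₂ with hN₂def
  set Nd := Real.sqrt Idd with hNddef
  set A := ρ (N₁ / R) with hAdef
  set B := ρ (N₂ / R) with hBdef
  have hI₁nn : 0 ≤ I₁ := integral_nonneg zero_le_one fun u _ => by positivity
  have hI₂nn : 0 ≤ I₂ := integral_nonneg zero_le_one fun u _ => by positivity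
  have hIddnn : 0 ≤ Idd := integral_nonneg zero_le_one fun u _ => by positivity
  have hN₁0 : 0 ≤ N₁ := Real.sqrt_nonneg _
  have hN₂0 : 0 ≤ N₂ := Real.sqrt_nonneg _
  have hNd0 : 0 ≤ Nd := Real.sqrt_nonneg _
  have hM0 : (0:ℝ) ≤ (M:ℝ) := M.2
  have hRne : R ≠ 0 := ne_of_gt hR
  have hrevt : N₁ ≤ Nd + N₂ := rev_triangle hc₁ hy₁' hc₂ hy₂'
  have hAB : |A - B| ≤ (M:ℝ) * Nd / R := by
    have hlip := hρ_lip.dist_le_mul (N₁ / R) (N₂ / R)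
    rw [Real.dist_eq, Real.dist_eq] at hlip
    have hdivle : N₂ / R ≤ N₁ / R := by gcongr
    have habs : |N₁ / R - N₂ / R| = (N₁ - N₂) / R := by
      rw [abs_of_nonneg (sub_nonneg.mpr hdivle)]
      ring
    rw [habs] at hlip
    calc |A - B| ≤ (M:ℝ) * ((N₁ - N₂) / R) := hlip
    _ ≤ (M:ℝ) * (Nd / R) := by gcongr; linarith
    _ = (M:ℝ) * Nd / R := by ring
  have hRHSnn : 0 ≤ (34 + 23 * (M:ℝ)) * R ^ 2 * Nd := by positivity
  -- integrability of the main integrand and of y₂²,( y₁-y₂)²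
  have hDcont : ContinuousOn (fun x => (A * (y₁ x) ^ 3 - B * (y₂ x) ^ 3) ^ 2) (Icc (0:ℝ) 1) := by
    fun_prop (disch := skip)
  have hDI : IntervalIntegrable (fun x => (A * (y₁ x) ^ 3 - B * (y₂ x) ^ 3) ^ 2)
      MeasureTheory.volume 0 1 := myII hDcont
  have hy₂sqI : IntervalIntegrable (fun x => (y₂ x) ^ 2) MeasureTheory.volume 0 1 :=
    myII (hc₂.pow 2)
  have hdsqI : IntervalIntegrable (fun x => (y₁ x - y₂ x) ^ 2) MeasureTheory.volume 0 1 :=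
    myII ((hc₁.sub hc₂).pow 2)
  have hy₂sq_le : (∫ x in (0:ℝ)..1, (y₂ x) ^ 2) ≤ I₂ := by
    rw [hI₂def]
    apply integral_mono_on zero_le_one hy₂sqI (myII ((hc₂.pow 2).add (hy₂'.pow 2)))
    intro x _; simp only [Pi.add_apply, Pi.pow_apply]; nlinarith [sq_nonneg (y₂' x)]
  have hdsq_le : (∫ x in (0:ℝ)..1, (y₁ x - y₂ x) ^ 2) ≤ Idd := by
    rw [hIdddef]
    apply integral_mono_on zero_le_one hdsqI
      (myII (((hc₁.sub hc₂).pow 2).add ((hy₁'.sub hy₂').pow 2)))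
    intro x _; simp only [Pi.add_apply, Pi.pow_apply, Pi.sub_apply]; nlinarith [sq_nonneg (y₁' x - y₂' x)]
  have hIdd_eq : Idd = Nd ^ 2 := (Real.sq_sqrt hIddnn).symm
  have hI₂_eq : I₂ = N₂ ^ 2 := (Real.sq_sqrt hI₂nn).symm
  have hI₁_eq : I₁ = N₁ ^ 2 := (Real.sq_sqrt hI₁nn).symm
  have hsupd₂ : ∀ x ∈ Icc (0:ℝ) 1, (y₂ x) ^ 2 ≤ 2 * I₂ := by
    intro x hx
    have h := sup_sq_le hy₂ hy₂' x hx
    rwa [← hI₂def] at h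
  have hsupd₁ : ∀ x ∈ Icc (0:ℝ) 1, (y₁ x) ^ 2 ≤ 2 * I₁ := by
    intro x hx
    have h := sup_sq_le hy₁ hy₁' x hx
    rwa [← hI₁def] at h
  clear_value A B Nd N₁ N₂ Idd I₁ I₂
  rcases le_or_gt (2 * R) N₂ with hcase | hcase
  · -- both cut-offs vanish
    have hA0 : A = 0 := by rw [hAdef]; exact hρ_zero _ (by rw [le_div_iff₀ hR]; linarith)
    have hB0 : B = 0 := by rw [hBdef]; exact hρ_zero _ (by rw [le_div_iff₀ hR]; linarith)
    rw [hA0, hB0]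
    simpa using hRHSnn
  · -- N₂ < 2R
    have hI₂le : I₂ ≤ 4 * R ^ 2 := by
      rw [hI₂_eq]
      have h := mul_self_le_mul_self hN₂0 hcase.le
      have e : (2 * R) * (2 * R) = 4 * R ^ 2 := by ring
      rw [pow_two]
      linarith
    have hsup₂ : ∀ x ∈ Icc (0:ℝ) 1, (y₂ x) ^ 2 ≤ 8 * R ^ 2 := by
      intro x hx
      have h := hsupd₂ x hx
      linarith
    rcases le_or_gt (2 * R) N₁ with hcase1 | hcase1
    · -- A = 0
      have hA0 : A = 0 := by rw [hAdef]; exact hρ_zero _ (by rw [le_div_iff₀ hR]; linarith)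
      have hBb : |B| ≤ (M:ℝ) * Nd / R := by
        rw [hA0] at hAB; simpa using hAB
      have hBsq : B ^ 2 ≤ ((M:ℝ) * Nd / R) ^ 2 := by
        rw [← sq_abs]
        exact pow_le_pow_left₀ (abs_nonneg _) hBb 2
      have hptw : ∀ x ∈ Icc (0:ℝ) 1, (A * (y₁ x) ^ 3 - B * (y₂ x) ^ 3) ^ 2
          ≤ ((M:ℝ) * Nd / R) ^ 2 * (8 * R ^ 2) ^ 2 * (y₂ x) ^ 2 := by
        intro x hx
        have h2 := hsup₂ x hx
        have h24 : ((y₂ x) ^ 2) ^ 2 ≤ (8 * R ^ 2) ^ 2 :=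
          pow_le_pow_left₀ (sq_nonneg _) h2 2
        calc (A * (y₁ x) ^ 3 - B * (y₂ x) ^ 3) ^ 2
            = B ^ 2 * ((y₂ x) ^ 2) ^ 2 * (y₂ x) ^ 2 := by rw [hA0]; ring
        _ ≤ ((M:ℝ) * Nd / R) ^ 2 * (8 * R ^ 2) ^ 2 * (y₂ x) ^ 2 := by
            apply mul_le_mul_of_nonneg_right _ (sq_nonneg _)
            exact mul_le_mul hBsq h24 (sq_nonneg _) (by positivity)
      have hint : (∫ x in (0:ℝ)..1, (A * (y₁ x) ^ 3 - B * (y₂ x) ^ 3) ^ 2)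
          ≤ ((34 + 23 * (M:ℝ)) * R ^ 2 * Nd) ^ 2 := by
        calc (∫ x in (0:ℝ)..1, (A * (y₁ x) ^ 3 - B * (y₂ x) ^ 3) ^ 2)
            ≤ ∫ x in (0:ℝ)..1, ((M:ℝ) * Nd / R) ^ 2 * (8 * R ^ 2) ^ 2 * (y₂ x) ^ 2 :=
              integral_mono_on zero_le_one hDI
                ((hy₂sqI.const_mul _)) hptw
        _ = ((M:ℝ) * Nd / R) ^ 2 * (8 * R ^ 2) ^ 2 * ∫ x in (0:ℝ)..1, (y₂ x) ^ 2 := by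
              rw [intervalIntegral.integral_const_mul]
        _ ≤ ((M:ℝ) * Nd / R) ^ 2 * (8 * R ^ 2) ^ 2 * (4 * R ^ 2) := by
              have : (∫ x in (0:ℝ)..1, (y₂ x) ^ 2) ≤ 4 * R ^ 2 := le_trans hy₂sq_le hI₂le
              exact mul_le_mul_of_nonneg_left this (by positivity)
        _ = 256 * (M:ℝ) ^ 2 * Nd ^ 2 * R ^ 4 := by field_simp; ring
        _ = 256 * (M:ℝ) ^ 2 * (Nd ^ 2 * R ^ 4) := by ring
        _ ≤ (34 + 23 * (M:ℝ)) ^ 2 * (Nd ^ 2 * R ^ 4) := by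
              have hkey : 256 * (M:ℝ) ^ 2 ≤ (34 + 23 * (M:ℝ)) ^ 2 := by
                linarith [hM0, sq_nonneg (M:ℝ)]
              exact mul_le_mul_of_nonneg_right hkey (by positivity)
        _ = ((34 + 23 * (M:ℝ)) * R ^ 2 * Nd) ^ 2 := by ring
      calc Real.sqrt (∫ x in (0:ℝ)..1, (A * (y₁ x) ^ 3 - B * (y₂ x) ^ 3) ^ 2)
          ≤ Real.sqrt (((34 + 23 * (M:ℝ)) * R ^ 2 * Nd) ^ 2) := Real.sqrt_le_sqrt hint
      _ = (34 + 23 * (M:ℝ)) * R ^ 2 * Nd := Real.sqrt_sq hRHSnn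
    · -- both N₁, N₂ < 2R
      have hI₁le : I₁ ≤ 4 * R ^ 2 := by
        rw [hI₁_eq]
        have h := mul_self_le_mul_self hN₁0 hcase1.le
        have e : (2 * R) * (2 * R) = 4 * R ^ 2 := by ring
        rw [pow_two]
        linarith
      have hsup₁ : ∀ x ∈ Icc (0:ℝ) 1, (y₁ x) ^ 2 ≤ 8 * R ^ 2 := by
        intro x hx
        have h := hsupd₁ x hx
        linarith
      have hA1 : A ≤ 1 := by rw [hAdef]; exact hρ_le_one _
      have hA0' : 0 ≤ A := by rw [hAdef]; exact hρ_nonneg _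
      have hABsq : (A - B) ^ 2 ≤ ((M:ℝ) * Nd / R) ^ 2 := by
        rw [← sq_abs]
        exact pow_le_pow_left₀ (abs_nonneg _) hAB 2
      have hptw : ∀ x ∈ Icc (0:ℝ) 1, (A * (y₁ x) ^ 3 - B * (y₂ x) ^ 3) ^ 2
          ≤ 1152 * R ^ 4 * (y₁ x - y₂ x) ^ 2
            + 128 * ((M:ℝ) * Nd / R) ^ 2 * R ^ 4 * (y₂ x) ^ 2 := by
        intro x hx
        set a := y₁ x
        set b := y₂ x
        have h1 := hsup₁ x hx
        have h2 := hsup₂ x hx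
        have hu0 : 0 ≤ a ^ 2 + a * b + b ^ 2 := by
          linarith [sq_nonneg (a + b), sq_nonneg a, sq_nonneg b]
        have hu : a ^ 2 + a * b + b ^ 2 ≤ 24 * R ^ 2 := by
          linarith [sq_nonneg (a - b), h1, h2]
        have husq : (a ^ 2 + a * b + b ^ 2) ^ 2 ≤ (24 * R ^ 2) ^ 2 :=
          pow_le_pow_left₀ hu0 hu 2
        have step1 : (a ^ 3 - b ^ 3) ^ 2 ≤ 576 * R ^ 4 * (a - b) ^ 2 := by
          calc (a ^ 3 - b ^ 3) ^ 2 = (a - b) ^ 2 * (a ^ 2 + a * b + b ^ 2) ^ 2 := by ring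
          _ ≤ (a - b) ^ 2 * (24 * R ^ 2) ^ 2 :=
              mul_le_mul_of_nonneg_left husq (sq_nonneg _)
          _ = 576 * R ^ 4 * (a - b) ^ 2 := by ring
        have hAsq : A ^ 2 ≤ 1 := by
          rw [pow_two]
          exact mul_le_one₀ hA1 hA0' hA1
        have t1 : (A * (a ^ 3 - b ^ 3)) ^ 2 ≤ 576 * R ^ 4 * (a - b) ^ 2 := by
          calc (A * (a ^ 3 - b ^ 3)) ^ 2 = A ^ 2 * (a ^ 3 - b ^ 3) ^ 2 := by ring
          _ ≤ 1 * (576 * R ^ 4 * (a - b) ^ 2) :=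
              mul_le_mul hAsq step1 (sq_nonneg _) zero_le_one
          _ = 576 * R ^ 4 * (a - b) ^ 2 := by ring
        have h24 : (b ^ 2) ^ 2 ≤ (8 * R ^ 2) ^ 2 := pow_le_pow_left₀ (sq_nonneg _) h2 2
        have t2 : ((A - B) * b ^ 3) ^ 2 ≤ ((M:ℝ) * Nd / R) ^ 2 * (8 * R ^ 2) ^ 2 * b ^ 2 := by
          calc ((A - B) * b ^ 3) ^ 2 = (A - B) ^ 2 * (b ^ 2) ^ 2 * b ^ 2 := by ring
          _ ≤ ((M:ℝ) * Nd / R) ^ 2 * (8 * R ^ 2) ^ 2 * b ^ 2 := by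
              apply mul_le_mul_of_nonneg_right _ (sq_nonneg _)
              exact mul_le_mul hABsq h24 (sq_nonneg _) (by positivity)
        have e : A * a ^ 3 - B * b ^ 3 = A * (a ^ 3 - b ^ 3) + (A - B) * b ^ 3 := by ring
        have hsplit : (A * (a ^ 3 - b ^ 3) + (A - B) * b ^ 3) ^ 2
            ≤ 2 * (A * (a ^ 3 - b ^ 3)) ^ 2 + 2 * ((A - B) * b ^ 3) ^ 2 := by
          linarith [sq_nonneg (A * (a ^ 3 - b ^ 3) - (A - B) * b ^ 3)]
        rw [e]
        calc (A * (a ^ 3 - b ^ 3) + (A - B) * b ^ 3) ^ 2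
            ≤ 2 * (A * (a ^ 3 - b ^ 3)) ^ 2 + 2 * ((A - B) * b ^ 3) ^ 2 := hsplit
        _ ≤ 2 * (576 * R ^ 4 * (a - b) ^ 2)
            + 2 * (((M:ℝ) * Nd / R) ^ 2 * (8 * R ^ 2) ^ 2 * b ^ 2) := by
              gcongr
        _ = 1152 * R ^ 4 * (a - b) ^ 2
            + 128 * ((M:ℝ) * Nd / R) ^ 2 * R ^ 4 * b ^ 2 := by ring
      have hgI : IntervalIntegrable (fun x => 1152 * R ^ 4 * (y₁ x - y₂ x) ^ 2
          + 128 * ((M:ℝ) * Nd / R) ^ 2 * R ^ 4 * (y₂ x) ^ 2) MeasureTheory.volume 0 1 :=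
        (hdsqI.const_mul _).add (hy₂sqI.const_mul _)
      have hint : (∫ x in (0:ℝ)..1, (A * (y₁ x) ^ 3 - B * (y₂ x) ^ 3) ^ 2)
          ≤ ((34 + 23 * (M:ℝ)) * R ^ 2 * Nd) ^ 2 := by
        calc (∫ x in (0:ℝ)..1, (A * (y₁ x) ^ 3 - B * (y₂ x) ^ 3) ^ 2)
            ≤ ∫ x in (0:ℝ)..1, (1152 * R ^ 4 * (y₁ x - y₂ x) ^ 2
              + 128 * ((M:ℝ) * Nd / R) ^ 2 * R ^ 4 * (y₂ x) ^ 2) :=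
              integral_mono_on zero_le_one hDI hgI hptw
        _ = 1152 * R ^ 4 * (∫ x in (0:ℝ)..1, (y₁ x - y₂ x) ^ 2)
            + 128 * ((M:ℝ) * Nd / R) ^ 2 * R ^ 4 * ∫ x in (0:ℝ)..1, (y₂ x) ^ 2 := by
              rw [intervalIntegral.integral_add (hdsqI.const_mul _) (hy₂sqI.const_mul _),
                intervalIntegral.integral_const_mul, intervalIntegral.integral_const_mul]
        _ ≤ 1152 * R ^ 4 * Nd ^ 2
            + 128 * ((M:ℝ) * Nd / R) ^ 2 * R ^ 4 * (4 * R ^ 2) := by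
              have e1 : (∫ x in (0:ℝ)..1, (y₁ x - y₂ x) ^ 2) ≤ Nd ^ 2 := by
                rw [← hIdd_eq]; exact hdsq_le
              have e2 : (∫ x in (0:ℝ)..1, (y₂ x) ^ 2) ≤ 4 * R ^ 2 := le_trans hy₂sq_le hI₂le
              gcongr
        _ = (1152 + 512 * (M:ℝ) ^ 2) * (R ^ 4 * Nd ^ 2) := by field_simp; ring
        _ ≤ (34 + 23 * (M:ℝ)) ^ 2 * (R ^ 4 * Nd ^ 2) := by
              have hkey : 1152 + 512 * (M:ℝ) ^ 2 ≤ (34 + 23 * (M:ℝ)) ^ 2 := by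
                linarith [hM0, sq_nonneg (M:ℝ)]
              exact mul_le_mul_of_nonneg_right hkey (by positivity)
        _ = ((34 + 23 * (M:ℝ)) * R ^ 2 * Nd) ^ 2 := by ring
      calc Real.sqrt (∫ x in (0:ℝ)..1, (A * (y₁ x) ^ 3 - B * (y₂ x) ^ 3) ^ 2)
          ≤ Real.sqrt (((34 + 23 * (M:ℝ)) * R ^ 2 * Nd) ^ 2) := Real.sqrt_le_sqrt hint
      _ = (34 + 23 * (M:ℝ)) * R ^ 2 * Nd := Real.sqrt_sq hRHSnn

/-- Lipschitz property of the truncated cubic nonlinearity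
`f_R(y) = ρ(‖y‖_{H¹}/R) y³`: there is a constant `C > 0` depending only on the
Lipschitz constant `M` of the cut-off `ρ` (and not on `R`) such that
`‖f_R(y₁) - f_R(y₂)‖_{L²(0,1)} ≤ C R² ‖y₁ - y₂‖_{H¹(0,1)}`. -/
theorem truncated_cubic_lipschitz
    (ρ : ℝ → ℝ) (M : ℝ≥0) (hM : 0 < M)
    (hρ_smooth : ContDiff ℝ (⊤ : ℕ∞) ρ)
    (hρ_nonneg : ∀ r, 0 ≤ ρ r) (hρ_le_one : ∀ r, ρ r ≤ 1)
    (hρ_one : ∀ r : ℝ, r ≤ 1 → ρ r = 1)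
    (hρ_zero : ∀ r : ℝ, 2 ≤ r → ρ r = 0)
    (hρ_lip : LipschitzWith M ρ) :
    ∃ C : ℝ, 0 < C ∧ ∀ R : ℝ, 0 < R →
      ∀ y₁ y₁' y₂ y₂' : ℝ → ℝ,
        (∀ x ∈ Icc (0:ℝ) 1, HasDerivAt y₁ (y₁' x) x) →
        ContinuousOn y₁' (Icc (0:ℝ) 1) →
        (∀ x ∈ Icc (0:ℝ) 1, HasDerivAt y₂ (y₂' x) x) →
        ContinuousOn y₂' (Icc (0:ℝ) 1) →
        Real.sqrt (∫ x in (0:ℝ)..1,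
            (ρ (Real.sqrt (∫ t in (0:ℝ)..1, ((y₁ t) ^ 2 + (y₁' t) ^ 2)) / R) * (y₁ x) ^ 3
              - ρ (Real.sqrt (∫ t in (0:ℝ)..1, ((y₂ t) ^ 2 + (y₂' t) ^ 2)) / R) * (y₂ x) ^ 3) ^ 2)
          ≤ C * R ^ 2 *
            Real.sqrt (∫ x in (0:ℝ)..1, ((y₁ x - y₂ x) ^ 2 + (y₁' x - y₂' x) ^ 2)) := by
  refine ⟨34 + 23 * (M:ℝ), by positivity, ?_⟩
  intro R hR y₁ y₁' y₂ y₂' hy₁ hy₁' hy₂ hy₂'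
  rcases le_total (Real.sqrt (∫ t in (0:ℝ)..1, ((y₂ t) ^ 2 + (y₂' t) ^ 2)))
      (Real.sqrt (∫ t in (0:ℝ)..1, ((y₁ t) ^ 2 + (y₁' t) ^ 2))) with h | h
  · exact core_lemma ρ M hρ_nonneg hρ_le_one hρ_zero hρ_lip R hR
      y₁ y₁' y₂ y₂' hy₁ hy₁' hy₂ hy₂' h
  · have key := core_lemma ρ M hρ_nonneg hρ_le_one hρ_zero hρ_lip R hR
      y₂ y₂' y₁ y₁' hy₂ hy₂' hy₁ hy₁' h
    have e1 : (∫ x in (0:ℝ)..1,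
        (ρ (Real.sqrt (∫ t in (0:ℝ)..1, ((y₂ t) ^ 2 + (y₂' t) ^ 2)) / R) * (y₂ x) ^ 3
          - ρ (Real.sqrt (∫ t in (0:ℝ)..1, ((y₁ t) ^ 2 + (y₁' t) ^ 2)) / R) * (y₁ x) ^ 3) ^ 2)
        = ∫ x in (0:ℝ)..1,
        (ρ (Real.sqrt (∫ t in (0:ℝ)..1, ((y₁ t) ^ 2 + (y₁' t) ^ 2)) / R) * (y₁ x) ^ 3
          - ρ (Real.sqrt (∫ t in (0:ℝ)..1, ((y₂ t) ^ 2 + (y₂' t) ^ 2)) / R) * (y₂ x) ^ 3) ^ 2 :=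
      intervalIntegral.integral_congr (fun x _ => by ring)
    have e2 : (∫ x in (0:ℝ)..1, ((y₂ x - y₁ x) ^ 2 + (y₂' x - y₁' x) ^ 2))
        = ∫ x in (0:ℝ)..1, ((y₁ x - y₂ x) ^ 2 + (y₁' x - y₂' x) ^ 2) :=
      intervalIntegral.integral_congr (fun x _ => by ring)
    rw [e1, e2] at key
    exact key
end
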